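/- Assume (S2), (S3) and (S5). Then for every x ∈ ℤ^N and every u ≠ 0 one has 0 < F(x,u) < (1/2) f(x,u) u, where F(x,u) = ∫₀ᵘ f(x,s) ds. -/
import Mathlib


noncomputable section

/-- the vertex set of the lattice graph `ℤ^N` -/
abbrev Vtx (N : ℕ) := Fin N → ℤ

/-- `F(x,u) = ∫₀ᵘ f(x,s) ds` -/
def Fint {N : ℕ} (f : Vtx N → ℝ → ℝ) (x : Vtx N) (u : ℝ) : ℝ := ∫ s in (0:ℝ)..u, f x s

/-- Under (S2), (S3) and (S5), for every `x ∈ ℤ^N` and `u ≠ 0` one has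
`0 < F(x,u) < (1/2) f(x,u) u`. -/
theorem statement3 (N : ℕ) (hN : 1 ≤ N) (f : Vtx N → ℝ → ℝ) (a p : ℝ)
    (ha : 0 < a) (hp : 2 < p)
    -- (S2): continuity and growth
    (hfcont : ∀ x, Continuous (f x))
    (hfgrowth : ∀ x u, |f x u| ≤ a * (|u| + |u| ^ (p - 1)))
    -- (S3): `f(x,u) = o(u)` uniformly in `x` as `u → 0`
    (hfsmall : ∀ ε > 0, ∃ δ > 0, ∀ (x : Vtx N) (u : ℝ), |u| ≤ δ → |f x u| ≤ ε * |u|)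
    -- (S5): `u ↦ f(x,u)/|u|` is strictly increasing on `(-∞,0)` and `(0,∞)`
    (hfmono : ∀ x : Vtx N, StrictMonoOn (fun u => f x u / |u|) (Set.Iio 0) ∧
      StrictMonoOn (fun u => f x u / |u|) (Set.Ioi 0)) :
    ∀ (x : Vtx N) (u : ℝ), u ≠ 0 → 0 < Fint f x u ∧ Fint f x u < (1/2) * f x u * u := by
  -- Step 1: f x s / s ≥ 0 for s > 0, f x s / |s| ≤ 0 for s < 0 (from (S3) + (S5))
  have hnnpos : ∀ (x : Vtx N) (t : ℝ), 0 < t → 0 ≤ f x t / t := by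
    intro x t ht
    by_contra h
    push_neg at h
    obtain ⟨c, hc⟩ : ∃ c, c = -(f x t / t) := ⟨_, rfl⟩
    have hc0 : 0 < c := by rw [hc]; linarith
    obtain ⟨δ, hδ0, hδ⟩ := hfsmall (c / 2) (by linarith)
    obtain ⟨r, hr⟩ : ∃ r, r = min δ (t / 2) := ⟨_, rfl⟩
    have hr0 : 0 < r := hr ▸ lt_min hδ0 (by linarith)
    have hrt : r < t := hr ▸ lt_of_le_of_lt (min_le_right _ _) (by linarith)
    have hmono := (hfmono x).2 (Set.mem_Ioi.mpr hr0) (Set.mem_Ioi.mpr ht) hrt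
    simp only [abs_of_pos hr0, abs_of_pos ht] at hmono
    have h1 : f x r < -c * r := by
      have : f x r / r < -c := by rw [hc] at *; linarith
      have := (div_lt_iff₀ hr0).mp this
      linarith
    have h2 := hδ x r (by rw [abs_of_pos hr0, hr]; exact min_le_left _ _)
    rw [abs_of_pos hr0] at h2
    have h3 : -f x r ≤ |f x r| := neg_le_abs _
    nlinarith [mul_pos hc0 hr0]
  have hnnneg : ∀ (x : Vtx N) (t : ℝ), t < 0 → f x t / |t| ≤ 0 := by
    intro x t ht
    by_contra h
    push_neg at h
    obtain ⟨c, hc⟩ : ∃ c, c = f x t / |t| := ⟨_, rfl⟩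
    have hc0 : 0 < c := hc ▸ h
    obtain ⟨δ, hδ0, hδ⟩ := hfsmall (c / 2) (by linarith)
    obtain ⟨r, hr⟩ : ∃ r, r = max (-δ) (t / 2) := ⟨_, rfl⟩
    have hr0 : r < 0 := hr ▸ max_lt (by linarith) (by linarith)
    have hrt : t < r := hr ▸ lt_of_lt_of_le (by linarith) (le_max_right _ _)
    have hmono := (hfmono x).1 (Set.mem_Iio.mpr ht) (Set.mem_Iio.mpr hr0) hrt
    have hcr : c < f x r / |r| := by rw [hc]; simpa using hmono
    have hrabs : 0 < |r| := abs_pos.mpr (ne_of_lt hr0)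
    have h1 : c * |r| < f x r := by
      have := (lt_div_iff₀ hrabs).mp hcr
      linarith
    have h2 := hδ x r (by rw [abs_of_neg hr0, hr]; linarith [le_max_left (-δ) (t/2)])
    have h3 : f x r ≤ |f x r| := le_abs_self _
    nlinarith [mul_pos hc0 hrabs]
  have fpos : ∀ (x : Vtx N) (s : ℝ), 0 < s → 0 < f x s := by
    intro x s hs
    have h1 := hnnpos x (s / 2) (by linarith)
    have hmono := (hfmono x).2 (Set.mem_Ioi.mpr (by linarith : (0:ℝ) < s / 2))
      (Set.mem_Ioi.mpr hs) (by linarith)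
    simp only [abs_of_pos (show (0:ℝ) < s / 2 by linarith), abs_of_pos hs] at hmono
    have h2 : 0 < f x s / s := lt_of_le_of_lt h1 hmono
    exact (div_pos_iff.mp h2).resolve_right (fun ⟨_, h⟩ => absurd hs (not_lt.mpr h.le)) |>.1
  have fneg : ∀ (x : Vtx N) (s : ℝ), s < 0 → f x s < 0 := by
    intro x s hs
    have h1 := hnnneg x (s / 2) (by linarith)
    have hmono := (hfmono x).1 (Set.mem_Iio.mpr hs)
      (Set.mem_Iio.mpr (by linarith : s / 2 < 0)) (by linarith)
    simp only at hmono
    have h2 : f x s / |s| < 0 := lt_of_lt_of_le hmono h1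
    have hsabs : 0 < |s| := abs_pos.mpr (ne_of_lt hs)
    have h3 := (div_neg_iff.mp h2).resolve_left (fun ⟨_, h⟩ => absurd hsabs (not_lt.mpr h.le))
    exact h3.1
  -- pointwise strict inequality for the upper bound
  have keystrict : ∀ (x : Vtx N) (u s : ℝ), s ∈ Set.Ioo (min 0 u) (max 0 u) →
      0 < f x u * s - f x s * u := by
    intro x u s hsmem
    have hune : u ≠ 0 := by
      intro h0; rw [h0] at hsmem; simp at hsmem
    rcases lt_or_gt_of_ne hune with hu | hu
    · -- u < 0, s ∈ (u, 0)
      rw [min_eq_right hu.le, max_eq_left hu.le] at hsmem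
      obtain ⟨hus, hs0⟩ := hsmem
      have hmono := (hfmono x).1 (Set.mem_Iio.mpr hu) (Set.mem_Iio.mpr hs0) hus
      simp only [abs_of_neg hu, abs_of_neg hs0] at hmono
      have h1 := (div_lt_div_iff₀ (by linarith : (0:ℝ) < -u) (by linarith : (0:ℝ) < -s)).mp hmono
      nlinarith
    · -- u > 0, s ∈ (0, u)
      rw [min_eq_left hu.le, max_eq_right hu.le] at hsmem
      obtain ⟨hs0, hsu⟩ := hsmem
      have hmono := (hfmono x).2 (Set.mem_Ioi.mpr hs0) (Set.mem_Ioi.mpr hu) hsu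
      simp only [abs_of_pos hs0, abs_of_pos hu] at hmono
      have h1 := (div_lt_div_iff₀ hs0 hu).mp hmono
      nlinarith
  intro x u hu
  have hintf : ∀ c d : ℝ, IntervalIntegrable (f x) MeasureTheory.volume c d :=
    fun c d => (hfcont x).intervalIntegrable c d
  rcases lt_or_gt_of_ne hu with hu0 | hu0
  · -- u < 0
    have hF : Fint f x u = -∫ s in u..(0:ℝ), f x s := by
      rw [Fint, intervalIntegral.integral_symm]
    constructor
    · have hpos : 0 < ∫ s in u..(0:ℝ), -f x s := by
        apply intervalIntegral.intervalIntegral_pos_of_pos_on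
          ((hintf u 0).neg)
        · intro s hs
          simp only [Pi.neg_apply]
          linarith [fneg x s hs.2]
        · exact hu0
      rw [intervalIntegral.integral_neg] at hpos
      rw [hF]; linarith
    · have hpos : 0 < ∫ s in u..(0:ℝ), (f x u * s - f x s * u) := by
        apply intervalIntegral.intervalIntegral_pos_of_pos_on
        · exact ((intervalIntegral.intervalIntegrable_id).const_mul (f x u)).sub
            ((hintf u 0).mul_const u)
        · intro s hs
          exact keystrict x u s (by
            rw [min_eq_right hu0.le, max_eq_left hu0.le]; exact hs)
        · exact hu0
      rw [intervalIntegral.integral_sub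
        ((intervalIntegral.intervalIntegrable_id).const_mul (f x u))
        ((hintf u 0).mul_const u),
        intervalIntegral.integral_const_mul, intervalIntegral.integral_mul_const,
        integral_id] at hpos
      have h6 : Fint f x u * u > 1/2 * f x u * u * u := by
        rw [hF]; nlinarith [hpos]
      nlinarith [h6, mul_self_nonneg u]
  · -- u > 0
    constructor
    · have hpos : 0 < ∫ s in (0:ℝ)..u, f x s := by
        apply intervalIntegral.intervalIntegral_pos_of_pos_on (hintf 0 u)
        · intro s hs
          exact fpos x s hs.1
        · exact hu0
      exact hpos
    · have hpos : 0 < ∫ s in (0:ℝ)..u, (f x u * s - f x s * u) := by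
        apply intervalIntegral.intervalIntegral_pos_of_pos_on
        · exact ((intervalIntegral.intervalIntegrable_id).const_mul (f x u)).sub
            ((hintf 0 u).mul_const u)
        · intro s hs
          exact keystrict x u s (by
            rw [min_eq_left hu0.le, max_eq_right hu0.le]; exact hs)
        · exact hu0
      rw [intervalIntegral.integral_sub
        ((intervalIntegral.intervalIntegrable_id).const_mul (f x u))
        ((hintf 0 u).mul_const u),
        intervalIntegral.integral_const_mul, intervalIntegral.integral_mul_const,
        integral_id] at hpos
      rw [Fint]
      nlinarith [hpos]
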